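/- arXiv:2203.02990 — 3 statements merged into one kernel-verified Lean document; each statement's English description precedes it below -/
import Mathlib

section
/- Let N ≥ 1, φ ≥ 2 be integers and set M = (φ+1)N (one fewer collocation node than required). Then the aliasing matrix is nonzero: taking i = N and n = φN, one has N + φN = M, and ∑_{j=0}^{M-1} cos(N t_j)·cos(φN t_j) = M/2 ≠ 0, where t_j = 2πj/M. -/
open Real Finset

theorem sum_range_cos_nat_mul_two_pi_div_eq_zero {M k : ℕ} (hk : ¬ M ∣ k) :
    ∑ j ∈ range M, cos (k * (2 * π * j / M)) = 0 := by
  rcases eq_or_ne M 0 with rfl | hM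
  · simp
  set ζ := Complex.exp (2 * π * Complex.I / M)
  have hζ : IsPrimitiveRoot ζ M := Complex.isPrimitiveRoot_exp M hM
  have hζk : ζ ^ k ≠ 1 := fun h => hk ((hζ.pow_eq_one_iff_dvd k).mp h)
  have hgeom : ∑ j ∈ range M, (ζ ^ k) ^ j = 0 := by
    rw [geom_sum_eq hζk, ← pow_mul, mul_comm, pow_mul, hζ.pow_eq_one, one_pow, sub_self, zero_div]
  have hre (j : ℕ) : ((ζ ^ k) ^ j).re = cos (k * (2 * π * j / M)) := by
    rw [← pow_mul, ← Complex.exp_nat_mul, ← Complex.exp_ofReal_mul_I_re]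
    push_cast
    ring_nf
  simpa [hre] using congrArg Complex.re hgeom

/-- Since `(a + b) * t_j = 2πj`, the harmonics `a` and `b` agree at every node, so the sum is
`∑ cos² (a * t_j) = M / 2 + ∑ cos (2a * t_j) / 2`. -/
theorem sum_range_cos_mul_cos_of_add_eq {M a b : ℕ} (hab : a + b = M) (ha : ¬ M ∣ 2 * a) :
    ∑ j ∈ range M, cos (a * (2 * π * j / M)) * cos (b * (2 * π * j / M)) = M / 2 := by
  have hterm : ∀ j ∈ range M, cos (a * (2 * π * j / M)) * cos (b * (2 * π * j / M))
      = (1 + cos ((2 * a : ℕ) * (2 * π * j / M))) / 2 := by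
    intro j hj
    have hM : (M : ℝ) ≠ 0 := Nat.cast_ne_zero.mpr (by grind)
    have hb : (b : ℝ) * (2 * π * j / M) = j * (2 * π) - a * (2 * π * j / M) := by
      rw [show (b : ℝ) = M - a by rw [← hab]; push_cast; ring]
      field_simp
    rw [hb, cos_nat_mul_two_pi_sub, ← sq, cos_sq]
    push_cast
    ring_nf
  rw [sum_congr rfl hterm, ← sum_div, sum_add_distrib, sum_range_cos_nat_mul_two_pi_div_eq_zero ha]
  simp

theorem aliasing_matrix_nonzero_at_critical_M (N φ : ℕ) (hN : 1 ≤ N) (hφ : 2 ≤ φ) :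
    let M := (φ + 1) * N
    let t : ℕ → ℝ := fun j => 2 * Real.pi * j / M
    N + φ * N = M ∧
    (∑ j ∈ Finset.range M, Real.cos (N * t j) * Real.cos ((φ * N : ℕ) * t j) = (M : ℝ) / 2) ∧
    ((M : ℝ) / 2 ≠ 0) := by
  have hMN : N + φ * N = (φ + 1) * N := by ring
  have hdvd : ¬ (φ + 1) * N ∣ 2 * N := Nat.not_dvd_of_pos_of_lt (by omega) (by nlinarith)
  refine ⟨hMN, sum_range_cos_mul_cos_of_add_eq hMN hdvd, ?_⟩
  have : (φ + 1) * N ≠ 0 := by positivity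
  exact div_ne_zero (by exact_mod_cast this) two_ne_zero
end

section
/- Conversely, if M, N, φ are positive integers with φ ≥ 2 and M ≤ (φ+1)N, then there exist an integer n with N < n ≤ φN and a nonzero integer m such that |n − mM| ≤ N. -/
/-! With `m = 1` it suffices to find `n` with `N < n ≤ φN` in the window `[M - N, M + N]`.
The choice `n = max (N + 1) (M - N)` works: `N + 1 ≤ 2N ≤ φN` and `M - N ≤ φN` bound it above,
while `n ≤ M + N` because `M ≥ 1`. -/

theorem dealiasing_bound_sharp (M N φ : ℕ) (hN : 0 < N) (hM : 0 < M) (hφ : 2 ≤ φ)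
    (hMN : M ≤ (φ + 1) * N) :
    ∃ n m : ℤ, (N : ℤ) < n ∧ n ≤ (φ : ℤ) * N ∧ m ≠ 0 ∧ |n - m * M| ≤ (N : ℤ) := by
  have h2N : (2 * N : ℤ) ≤ φ * N := by exact_mod_cast Nat.mul_le_mul_right N hφ
  have hMφN : (M : ℤ) ≤ φ * N + N := by exact_mod_cast add_one_mul φ N ▸ hMN
  refine ⟨max (N + 1 : ℤ) (M - N), 1, lt_max_of_lt_left (lt_add_one _), ?_, one_ne_zero, ?_⟩
  · exact max_le (by omega) (by omega)
  · rw [one_mul, abs_le]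
    omega
end

section
/- Let N ≥ 1, φ ≥ 2, M > (φ+1)N, with nodes t_j = 2π(j−1)/M, let E be the M×(2N+1) collocation matrix of harmonics 0..N, E⁺ its explicit left inverse as defined above, and E₁ the M×(2(φ−1)N) matrix of harmonics N+1..φN at the same nodes. Suppose f(t) is a trigonometric polynomial of degree at most φN with coefficient vector (ĥ, ĥ′), where ĥ collects coefficients of harmonics 0..N and ĥ′ those of harmonics N+1..φN, and let f̃ = (f(t₁),…,f(t_M)). Then f̃ = E ĥ + E₁ ĥ′ and E⁺ f̃ = ĥ. -/
open Real Finset Matrix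

/-- The `i`-th trigonometric basis function of the retained harmonics `0..N`:
`1`, `cos t`, `sin t`, `cos 2t`, `sin 2t`, … -/
noncomputable def trigBasis (i : ℕ) (t : ℝ) : ℝ :=
  if i = 0 then 1
  else if i % 2 = 1 then Real.cos (((i + 1) / 2 : ℕ) * t)
  else Real.sin ((i / 2 : ℕ) * t)

/-- The `c`-th basis function of the higher harmonics `N+1..φN`:
`cos ((N+1)t), sin ((N+1)t), …, cos (φN t), sin (φN t)`. -/
noncomputable def trigBasisHigh (N c : ℕ) (t : ℝ) : ℝ :=
  if c % 2 = 0 then Real.cos (((N + 1 + c / 2 : ℕ)) * t)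
  else Real.sin (((N + 1 + c / 2 : ℕ)) * t)


/-! At the nodes `2πj/M` the harmonics `cos nt`, `sin nt` sample to vectors that are mutually
orthogonal as long as the two frequencies of every pair add up to less than `M`: by the
product-to-sum formulas this reduces to `∑ⱼ ζ^(kj) = 0` for an `M`-th root of unity `ζ^k ≠ 1`.
`E⁺` is `Eᵀ` with each row divided by the squared norm of the corresponding column of `E`, so
`E⁺E = 1`; the bound `M > (φ+1)N` keeps every (retained, higher) pair of frequencies below `M`,
so `E⁺E₁ = 0`, and `E⁺f̃ = E⁺(Eĥ + E₁ĥ′) = ĥ`. -/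

theorem sum_exp_nodes_eq_zero {M : ℕ} {k : ℤ} (hk : ¬ (M : ℤ) ∣ k) :
    ∑ j : Fin M, Complex.exp (↑(k * (2 * π * (j : ℕ) / M)) * Complex.I) = 0 := by
  rcases eq_or_ne M 0 with rfl | hM
  · simp
  have hζ := Complex.isPrimitiveRoot_exp M hM
  set z := Complex.exp (2 * π * Complex.I / M) ^ k with hz_def
  have hz : z ≠ 1 := fun h => hk ((hζ.zpow_eq_one_iff_dvd k).1 h)
  have hzM : z ^ M = 1 := by
    rw [← zpow_natCast, zpow_comm, zpow_natCast, hζ.pow_eq_one, _root_.one_zpow]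
  have hterm (j : ℕ) : Complex.exp (↑(k * (2 * π * j / M)) * Complex.I) = z ^ j := by
    rw [hz_def, ← Complex.exp_int_mul, ← Complex.exp_nat_mul]
    congr 1
    push_cast
    ring
  simp only [hterm]
  rw [Fin.sum_univ_eq_sum_range (z ^ ·), geom_sum_eq hz, hzM, sub_self, zero_div]

theorem sum_cos_nodes {M : ℕ} {k : ℤ} (hk : k.natAbs < M) :
    ∑ j : Fin M, cos (k * (2 * π * (j : ℕ) / M)) = if k = 0 then (M : ℝ) else 0 := by
  split_ifs with h0
  · simp [h0]
  · have hdvd : ¬ (M : ℤ) ∣ k := fun h =>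
      h0 (Int.eq_zero_of_dvd_of_natAbs_lt_natAbs h (by simpa using hk))
    simpa [← Complex.exp_ofReal_mul_I_re] using congrArg Complex.re (sum_exp_nodes_eq_zero hdvd)

theorem sum_sin_nodes {M : ℕ} {k : ℤ} (hk : k.natAbs < M) :
    ∑ j : Fin M, sin (k * (2 * π * (j : ℕ) / M)) = 0 := by
  rcases eq_or_ne k 0 with h0 | h0
  · simp [h0]
  · have hdvd : ¬ (M : ℤ) ∣ k := fun h =>
      h0 (Int.eq_zero_of_dvd_of_natAbs_lt_natAbs h (by simpa using hk))
    simpa [← Complex.exp_ofReal_mul_I_im] using congrArg Complex.im (sum_exp_nodes_eq_zero hdvd)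

theorem sum_cos_mul_cos_nodes {M a b : ℕ} (hab : a + b < M) :
    ∑ j : Fin M, cos (a * (2 * π * (j : ℕ) / M)) * cos (b * (2 * π * (j : ℕ) / M)) =
      if a = b then (if a = 0 then (M : ℝ) else M / 2) else 0 := by
  have hterm (x : ℝ) : cos (a * x) * cos (b * x) =
      (cos (((a - b : ℤ) : ℝ) * x) + cos (((a + b : ℤ) : ℝ) * x)) / 2 := by
    push_cast
    rw [sub_mul, add_mul, cos_sub, cos_add]
    ring
  simp only [hterm, ← Finset.sum_div, Finset.sum_add_distrib]
  rw [sum_cos_nodes (by omega), sum_cos_nodes (by omega)]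
  split_ifs <;> first | omega | ring

theorem sum_sin_mul_sin_nodes {M a b : ℕ} (hab : a + b < M) :
    ∑ j : Fin M, sin (a * (2 * π * (j : ℕ) / M)) * sin (b * (2 * π * (j : ℕ) / M)) =
      if a = b then (if a = 0 then 0 else (M : ℝ) / 2) else 0 := by
  have hterm (x : ℝ) : sin (a * x) * sin (b * x) =
      (cos (((a - b : ℤ) : ℝ) * x) - cos (((a + b : ℤ) : ℝ) * x)) / 2 := by
    push_cast
    rw [sub_mul, add_mul, cos_sub, cos_add]
    ring
  simp only [hterm, ← Finset.sum_div, Finset.sum_sub_distrib]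
  rw [sum_cos_nodes (by omega), sum_cos_nodes (by omega)]
  split_ifs <;> first | omega | ring

theorem sum_sin_mul_cos_nodes {M a b : ℕ} (hab : a + b < M) :
    ∑ j : Fin M, sin (a * (2 * π * (j : ℕ) / M)) * cos (b * (2 * π * (j : ℕ) / M)) = 0 := by
  have hterm (x : ℝ) : sin (a * x) * cos (b * x) =
      (sin (((a - b : ℤ) : ℝ) * x) + sin (((a + b : ℤ) : ℝ) * x)) / 2 := by
    push_cast
    rw [sub_mul, add_mul, sin_sub, sin_add]
    ring
  simp only [hterm, ← Finset.sum_div, Finset.sum_add_distrib]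
  rw [sum_sin_nodes (by omega), sum_sin_nodes (by omega)]
  norm_num

theorem trigBasis_eq_cos {i : ℕ} (hi : i % 2 = 1 ∨ i = 0) (t : ℝ) :
    trigBasis i t = cos (((i + 1) / 2 : ℕ) * t) := by
  rcases hi with hi | rfl
  · simp [trigBasis, hi, show i ≠ 0 by omega]
  · simp [trigBasis]

theorem trigBasis_eq_sin {i : ℕ} (hi : i % 2 = 0) (hi0 : i ≠ 0) (t : ℝ) :
    trigBasis i t = sin (((i + 1) / 2 : ℕ) * t) := by
  rw [trigBasis, if_neg hi0, if_neg (by omega), show (i + 1) / 2 = i / 2 by omega]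

theorem trigBasisHigh_eq_trigBasis (N c : ℕ) (t : ℝ) :
    trigBasisHigh N c t = trigBasis (2 * N + 1 + c) t := by
  have hfreq : (2 * N + 1 + c + 1) / 2 = N + 1 + c / 2 := by omega
  rcases Nat.mod_two_eq_zero_or_one c with hc | hc
  · rw [trigBasisHigh, if_pos hc, trigBasis_eq_cos (by omega), hfreq]
  · rw [trigBasisHigh, if_neg (by omega), trigBasis_eq_sin (by omega) (by omega), hfreq]

theorem sum_trigBasis_mul_trigBasis {M i i' : ℕ} (h : (i + 1) / 2 + (i' + 1) / 2 < M) :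
    ∑ j : Fin M, trigBasis i (2 * π * (j : ℕ) / M) * trigBasis i' (2 * π * (j : ℕ) / M) =
      if i = i' then (if i = 0 then (M : ℝ) else M / 2) else 0 := by
  have hcases (n : ℕ) : (n % 2 = 1 ∨ n = 0) ∨ (n % 2 = 0 ∧ n ≠ 0) := by omega
  rcases hcases i with hi | ⟨hi, hi0⟩ <;> rcases hcases i' with hi' | ⟨hi', hi0'⟩
  · simp only [trigBasis_eq_cos hi, trigBasis_eq_cos hi']
    rw [sum_cos_mul_cos_nodes h]
    split_ifs <;> first | rfl | omega
  · simp only [trigBasis_eq_cos hi, trigBasis_eq_sin hi' hi0', mul_comm (cos _)]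
    rw [sum_sin_mul_cos_nodes (by omega), if_neg (by omega)]
  · simp only [trigBasis_eq_sin hi hi0, trigBasis_eq_cos hi']
    rw [sum_sin_mul_cos_nodes h, if_neg (by omega)]
  · simp only [trigBasis_eq_sin hi hi0, trigBasis_eq_sin hi' hi0']
    rw [sum_sin_mul_sin_nodes h]
    split_ifs <;> first | rfl | omega

theorem sum_leftInverse_mul_trigBasis {M i i' : ℕ} (h : (i + 1) / 2 + (i' + 1) / 2 < M) :
    ∑ j : Fin M, (2 / (M : ℝ)) * (if i = 0 then 1 / 2 else trigBasis i (2 * π * (j : ℕ) / M)) *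
      trigBasis i' (2 * π * (j : ℕ) / M) = if i = i' then 1 else 0 := by
  have hM : (M : ℝ) ≠ 0 := Nat.cast_ne_zero.2 (by omega)
  have hrow (t s : ℝ) : (2 / (M : ℝ)) * (if i = 0 then 1 / 2 else trigBasis i t) * s =
      (if i = 0 then 1 / (M : ℝ) else 2 / M) * (trigBasis i t * s) := by
    rcases eq_or_ne i 0 with rfl | hi
    · simp only [if_true, trigBasis]
      ring
    · simp only [if_neg hi, mul_assoc]
  simp only [hrow, ← Finset.mul_sum]
  rw [sum_trigBasis_mul_trigBasis h]
  split_ifs <;> simp [hM]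

theorem conditional_identity_general (N φ M : ℕ) (hφ : 2 ≤ φ)
    (hM : (φ + 1) * N < M)
    (f : ℝ → ℝ) (h : Fin (2 * N + 1) → ℝ) (h' : Fin (2 * (φ - 1) * N) → ℝ)
    (hf : ∀ t : ℝ, f t =
      (∑ i : Fin (2 * N + 1), h i * trigBasis i t) +
      (∑ c : Fin (2 * (φ - 1) * N), h' c * trigBasisHigh N c t)) :
    let t : Fin M → ℝ := fun j => 2 * Real.pi * (j : ℕ) / M
    let E : Matrix (Fin M) (Fin (2 * N + 1)) ℝ := fun j i => trigBasis i (t j)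
    let E₁ : Matrix (Fin M) (Fin (2 * (φ - 1) * N)) ℝ := fun j c => trigBasisHigh N c (t j)
    let Ep : Matrix (Fin (2 * N + 1)) (Fin M) ℝ := fun i j =>
      (2 / M) * (if (i : ℕ) = 0 then (1 : ℝ) / 2 else trigBasis i (t j))
    let ftilde : Fin M → ℝ := fun j => f (t j)
    ftilde = E.mulVec h + E₁.mulVec h' ∧ Ep.mulVec ftilde = h := by
  intro t E E₁ Ep ftilde
  have hsample : ftilde = E *ᵥ h + E₁ *ᵥ h' := by
    funext j
    simp only [ftilde, hf, Pi.add_apply, mulVec, dotProduct, E, E₁, mul_comm]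
  have hsplit : (φ + 1) * N = 2 * N + (φ - 1) * N := by
    rw [← add_mul]
    congr 1
    omega
  have hEpE : Ep * E = 1 := by
    ext i i'
    rw [mul_apply, one_apply]
    simpa only [Fin.val_inj] using
      sum_leftInverse_mul_trigBasis (M := M) (i := i) (i' := i') (by omega)
  have hEpE₁ : Ep * E₁ = 0 := by
    ext i c
    have hc : (c : ℕ) < 2 * ((φ - 1) * N) := by simpa [mul_assoc] using c.isLt
    rw [mul_apply, Matrix.zero_apply]
    simp only [E₁, trigBasisHigh_eq_trigBasis]
    rw [sum_leftInverse_mul_trigBasis (M := M) (i := i) (i' := 2 * N + 1 + c) (by omega),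
      if_neg (by omega)]
  refine ⟨hsample, ?_⟩
  rw [hsample, mulVec_add, mulVec_mulVec, mulVec_mulVec, hEpE, hEpE₁, one_mulVec, zero_mulVec,
    add_zero]

theorem conditional_identity (N φ M : ℕ) (hN : 1 ≤ N) (hφ : 2 ≤ φ)
    (hM : (φ + 1) * N < M)
    (f : ℝ → ℝ) (h : Fin (2 * N + 1) → ℝ) (h' : Fin (2 * (φ - 1) * N) → ℝ)
    (hf : ∀ t : ℝ, f t =
      (∑ i : Fin (2 * N + 1), h i * trigBasis i t) +
      (∑ c : Fin (2 * (φ - 1) * N), h' c * trigBasisHigh N c t)) :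
    let t : Fin M → ℝ := fun j => 2 * Real.pi * (j : ℕ) / M
    let E : Matrix (Fin M) (Fin (2 * N + 1)) ℝ := fun j i => trigBasis i (t j)
    let E₁ : Matrix (Fin M) (Fin (2 * (φ - 1) * N)) ℝ := fun j c => trigBasisHigh N c (t j)
    let Ep : Matrix (Fin (2 * N + 1)) (Fin M) ℝ := fun i j =>
      (2 / M) * (if (i : ℕ) = 0 then (1 : ℝ) / 2 else trigBasis i (t j))
    let ftilde : Fin M → ℝ := fun j => f (t j)
    ftilde = E.mulVec h + E₁.mulVec h' ∧ Ep.mulVec ftilde = h :=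
  conditional_identity_general N φ M hφ hM f h h' hf
end
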